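/- Let V : ℝ → ℝ be bounded and continuous and E real. Let u solve −u″ + Vu = Eu on [0,∞) with u(0) = 0 and u not identically zero, and let v be twice continuously differentiable with −v″ + Vv = Ev + u on [0,∞) and v(0) = v′(0) = 0. If x₀ > 0 and u(x₀) = 0, then v(x₀)·u′(x₀) = ∫₀^{x₀} u(x)² dx. (In particular, since u′(x₀) ≠ 0, the zero x₀(E) of u(·,E) is strictly decreasing in E.) -/

import Mathlib

open Set

/-! The modified Wronskian `W = u' v - u v'` has derivative `u²`: the potential terms cancel
and only the inhomogeneity of `v` survives. Integrating over `[0, x₀]`, `W` vanishes at `0`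
because `u(0) = v(0) = 0`, and equals `u'(x₀) v(x₀)` at `x₀` because `u(x₀) = 0`. -/

theorem hasDerivAt_wronskian_of_deriv_deriv_eq {u v : ℝ → ℝ} {x q : ℝ}
    (hu : DifferentiableAt ℝ u x) (hv : DifferentiableAt ℝ v x)
    (hu' : DifferentiableAt ℝ (deriv u) x) (hv' : DifferentiableAt ℝ (deriv v) x)
    (hu'' : deriv (deriv u) x = q * u x) (hv'' : deriv (deriv v) x = q * v x - u x) :
    HasDerivAt (fun y => deriv u y * v y - u y * deriv v y) (u x ^ 2) x := by
  have hu'_der : HasDerivAt (deriv u) (q * u x) x := hu'' ▸ hu'.hasDerivAt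
  have hv'_der : HasDerivAt (deriv v) (q * v x - u x) x := hv'' ▸ hv'.hasDerivAt
  exact ((hu'_der.mul hv.hasDerivAt).sub (hu.hasDerivAt.mul hv'_der)).congr_deriv (by ring)

theorem energy_derivative_at_zero (V : ℝ → ℝ) (E : ℝ) (u v : ℝ → ℝ)
    (hu : ContDiff ℝ 2 u)
    (hodeu : ∀ x ∈ Ici (0 : ℝ), deriv (deriv u) x = (V x - E) * u x)
    (hu0 : u 0 = 0)
    (hv : ContDiff ℝ 2 v)
    (hodev : ∀ x ∈ Ici (0 : ℝ), deriv (deriv v) x = (V x - E) * v x - u x)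
    (hv0 : v 0 = 0)
    (x₀ : ℝ) (hx₀ : 0 < x₀) (hux₀ : u x₀ = 0) :
    v x₀ * deriv u x₀ = ∫ x in (0 : ℝ)..x₀, (u x) ^ 2 := by
  have hW : ∀ x ∈ uIcc 0 x₀,
      HasDerivAt (fun y => deriv u y * v y - u y * deriv v y) (u x ^ 2) x := by
    intro x hx
    have hx0 : x ∈ Ici (0 : ℝ) := by
      rw [uIcc_of_le hx₀.le] at hx
      exact hx.1
    exact hasDerivAt_wronskian_of_deriv_deriv_eq (hu.differentiable two_ne_zero x)
      (hv.differentiable two_ne_zero x) (hu.differentiable_deriv_two x)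
      (hv.differentiable_deriv_two x) (hodeu x hx0) (hodev x hx0)
  rw [intervalIntegral.integral_eq_sub_of_hasDerivAt hW
    ((hu.continuous.pow 2).intervalIntegrable 0 x₀)]
  simp [hu0, hv0, hux₀, mul_comm]
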